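/- arXiv:2305.11110 — 5 statements merged into one kernel-verified Lean document; each statement's English description precedes it below -/
import Mathlib

section
/- Let P be the uniform probability measure on the segment {(x,0) : 0 ≤ x ≤ 2} ⊂ ℝ², and let the constraint be the segment of the line y = 1 between (1/2, 1) and (3/2, 1). Then {(1,1)} is an optimal set of one point, {(1/2,1),(3/2,1)} is an optimal set of two points, and for every n ≥ 3 the set α_n = {(a_i, 1) : 1 ≤ i ≤ n} with a_1 = 1/2, a_i = 1/2 + (i−1)/(n−1) for 2 ≤ i ≤ n−1, and a_n = 3/2, is an optimal set of n points, with nth constrained quantization error V_n = (25n² − 50n + 26)/(24(n−1)²). -/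
/-!
Writing the points of `α` as `(t, 1)`, the distortion is `1 + ½ ∫₀² min_{t} (x - t)² dx`. For
sorted abscissae `t₀ ≤ ⋯ ≤ t_k` the integral equals
`t₀³/3 + (2 - t_k)³/3 + ∑ (t_{i+1} - t_i)³/12`: on each gap the nearer endpoint wins. The power
mean inequality bounds the sum of cubed gaps below by `(t_k - t₀)³/(n - 1)²`, and tangent lines
to the three cubes reduce what is left to the constraint `1/2 ≤ t₀ ≤ t_k ≤ 3/2`. The evenly spaced
grid from `1/2` to `3/2` attains the bound; a single point does best at `(1, 1)`, the minimum of
`a³ + (2 - a)³`.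
-/

open MeasureTheory Real Set

noncomputable section

abbrev E2 : Type := EuclideanSpace ℝ (Fin 2)

/-- The point `(x, y)` of the Euclidean plane. -/
def cpt (x y : ℝ) : E2 := WithLp.toLp 2 ![x, y]

/-- Distortion error of `P` with respect to the set `α`: `∫ min_{a ∈ α} ‖x - a‖² dP(x)`. -/
def cDistortion (P : Measure E2) (α : Set E2) : ℝ :=
  ∫ x, (⨅ a : α, dist x (a : E2) ^ 2) ∂P

/-- The `n`th constrained quantization error of `P` with constraint set `S`. -/
def cqError (P : Measure E2) (S : Set E2) (n : ℕ) : ℝ :=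
  sInf {v : ℝ | ∃ α : Set E2, α ⊆ S ∧ α.Finite ∧ 1 ≤ α.ncard ∧ α.ncard ≤ n ∧
    v = cDistortion P α}

/-- `α` is an optimal set of `n` points for `P` with constraint `S`: it is an admissible set
attaining the `n`th constrained quantization error. -/
def IsOptimalNSet (P : Measure E2) (S : Set E2) (n : ℕ) (α : Set E2) : Prop :=
  α ⊆ S ∧ α.Finite ∧ 1 ≤ α.ncard ∧ α.ncard ≤ n ∧ cDistortion P α = cqError P S n

/-- The uniform probability distribution on the interval `[a, b]`. -/
def uniformIccM (a b : ℝ) : Measure ℝ :=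
  (ENNReal.ofReal (b - a))⁻¹ • volume.restrict (Icc a b)

/-- The point of the line `y = m x + c` with abscissa `t`. -/
def segPt (m c t : ℝ) : E2 := cpt t (m * t + c)

local notation "P₀" => Measure.map (fun x : ℝ => cpt x 0) (uniformIccM 0 2)
local notation "S₀" => segment ℝ (cpt (1/2) 1) (cpt (3/2) 1)

theorem dist_cpt_sq (x y x' y' : ℝ) :
    dist (cpt x y) (cpt x' y') ^ 2 = (x - x') ^ 2 + (y - y') ^ 2 := by
  rw [EuclideanSpace.dist_eq, Real.sq_sqrt (by positivity)]
  simp [cpt, Fin.sum_univ_two, Real.dist_eq, sq_abs]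

theorem cpt_left_injective (y : ℝ) : Function.Injective (cpt · y) := fun a b h => by
  simpa [cpt] using congrArg (fun v : E2 => v 0) h

theorem segment_cpt_eq_image {a b : ℝ} (y : ℝ) (hab : a ≤ b) :
    segment ℝ (cpt a y) (cpt b y) = (cpt · y) '' Icc a b := by
  rw [← segment_eq_Icc hab, segment_eq_image, segment_eq_image, ← image_comp]
  congr 1
  funext θ
  ext i
  fin_cases i <;> simp [cpt]; ring

theorem iInf_image_finset_eq_inf' {ι γ β : Type*} [ConditionallyCompleteLattice β]
    (T : Finset ι) (hT : T.Nonempty) (f : ι → γ) (g : γ → β) :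
    ⨅ a : f '' T, g a = T.inf' hT (g ∘ f) := by
  rw [← sInf_image', ← image_comp, Finset.inf'_eq_csInf_image]

theorem integral_uniformIccM {E : Type*} [NormedAddCommGroup E] [NormedSpace ℝ E] {a b : ℝ}
    (hab : a ≤ b) (g : ℝ → E) :
    ∫ x, g x ∂uniformIccM a b = (b - a)⁻¹ • ∫ x in a..b, g x := by
  rw [uniformIccM, integral_smul_measure, intervalIntegral.integral_of_le hab,
    integral_Icc_eq_integral_Ioc, ENNReal.toReal_inv, ENNReal.toReal_ofReal (sub_nonneg.2 hab)]

theorem cDistortion_image_cpt (T : Finset ℝ) (hT : T.Nonempty) :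
    cDistortion P₀ ((cpt · 1) '' T)
      = 1 + (1/2) * ∫ x in (0:ℝ)..2, T.inf' hT (fun t => (x - t) ^ 2) := by
  have hcont : Continuous fun y : E2 => T.inf' hT fun t => dist y (cpt t 1) ^ 2 :=
    Continuous.finset_inf'_apply hT fun t _ => (continuous_id.dist continuous_const).pow 2
  have hshift (x : ℝ) : (T.inf' hT fun t => dist (cpt x 0) (cpt t 1) ^ 2)
      = (T.inf' hT fun t => (x - t) ^ 2) + 1 := by
    rw [Finset.apply_inf'_eq_inf'_comp hT (· + 1) fun _ _ => (min_add_add_right _ _ _).symm]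
    simp [dist_cpt_sq]
  have hint : Continuous fun x : ℝ => T.inf' hT fun t => (x - t) ^ 2 :=
    Continuous.finset_inf'_apply hT fun t _ => by fun_prop
  have hinf (y : E2) :
      ⨅ a : (cpt · 1) '' T, dist y a ^ 2 = T.inf' hT fun t => dist y (cpt t 1) ^ 2 :=
    iInf_image_finset_eq_inf' T hT _ (fun a => dist y a ^ 2)
  simp only [cDistortion, hinf]
  rw [integral_map (by unfold cpt; fun_prop) hcont.aestronglyMeasurable,
    integral_uniformIccM zero_le_two]
  simp only [hshift]
  rw [intervalIntegral.integral_add (hint.intervalIntegrable _ _) intervalIntegrable_const]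
  simp
  ring

theorem integral_sq_sub (a b c : ℝ) :
    ∫ x in a..b, (x - c) ^ 2 = ((b - c) ^ 3 - (a - c) ^ 3) / 3 := by
  rw [intervalIntegral.integral_comp_sub_right (· ^ 2), integral_pow]
  norm_num

theorem integral_min_sq_sub {a b : ℝ} (hab : a ≤ b) :
    ∫ x in a..b, min ((x - a) ^ 2) ((x - b) ^ 2) = (b - a) ^ 3 / 12 := by
  have hcont : Continuous fun x : ℝ => min ((x - a) ^ 2) ((x - b) ^ 2) := by fun_prop
  have hleft : ∫ x in a..(a + b) / 2, min ((x - a) ^ 2) ((x - b) ^ 2)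
      = ∫ x in a..(a + b) / 2, (x - a) ^ 2 := by
    refine intervalIntegral.integral_congr fun x hx => min_eq_left ?_
    rw [uIcc_of_le (by linarith)] at hx
    nlinarith [hx.1, hx.2]
  have hright : ∫ x in (a + b) / 2..b, min ((x - a) ^ 2) ((x - b) ^ 2)
      = ∫ x in (a + b) / 2..b, (x - b) ^ 2 := by
    refine intervalIntegral.integral_congr fun x hx => min_eq_right ?_
    rw [uIcc_of_le (by linarith)] at hx
    nlinarith [hx.1, hx.2]
  rw [← intervalIntegral.integral_add_adjacent_intervals (b := (a + b) / 2)
    (hcont.intervalIntegrable _ _) (hcont.intervalIntegrable _ _), hleft, hright,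
    integral_sq_sub, integral_sq_sub]
  ring

section SortedPoints

variable {k : ℕ} {t : ℕ → ℝ}

theorem inf'_sq_sub_eq_of_le_first (ht : Monotone t)
    (hT : ((Finset.range (k + 1)).image t).Nonempty) {x : ℝ} (hx : x ≤ t 0) :
    ((Finset.range (k + 1)).image t).inf' hT (fun s => (x - s) ^ 2) = (x - t 0) ^ 2 := by
  refine le_antisymm (Finset.inf'_le _ (Finset.mem_image_of_mem t (by simp))) ?_
  simp only [Finset.le_inf'_iff, Finset.forall_mem_image]
  intro j _
  nlinarith [ht (Nat.zero_le j)]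

theorem inf'_sq_sub_eq_of_last_le (ht : Monotone t)
    (hT : ((Finset.range (k + 1)).image t).Nonempty) {x : ℝ} (hx : t k ≤ x) :
    ((Finset.range (k + 1)).image t).inf' hT (fun s => (x - s) ^ 2) = (x - t k) ^ 2 := by
  refine le_antisymm (Finset.inf'_le _ (Finset.mem_image_of_mem t (by simp))) ?_
  simp only [Finset.le_inf'_iff, Finset.forall_mem_image, Finset.mem_range]
  intro j hj
  nlinarith [ht (Nat.le_of_lt_succ hj)]

theorem inf'_sq_sub_eq_min (ht : Monotone t) (hT : ((Finset.range (k + 1)).image t).Nonempty)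
    {i : ℕ} (hi : i < k) {x : ℝ} (hx : x ∈ Icc (t i) (t (i + 1))) :
    ((Finset.range (k + 1)).image t).inf' hT (fun s => (x - s) ^ 2)
      = min ((x - t i) ^ 2) ((x - t (i + 1)) ^ 2) := by
  refine le_antisymm (le_min (Finset.inf'_le _ (Finset.mem_image_of_mem t (by simp; omega)))
    (Finset.inf'_le _ (Finset.mem_image_of_mem t (by simp; omega)))) ?_
  simp only [Finset.le_inf'_iff, Finset.forall_mem_image]
  intro j _
  rcases le_or_gt j i with hji | hij
  · exact (min_le_left _ _).trans (by nlinarith [ht hji, hx.1])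
  · exact (min_le_right _ _).trans (by nlinarith [ht (Nat.succ_le_of_lt hij), hx.2])

theorem integral_inf'_sq_sub (ht : Monotone t) (hT : ((Finset.range (k + 1)).image t).Nonempty)
    {a b : ℝ} (ha : a ≤ t 0) (hb : t k ≤ b) :
    ∫ x in a..b, ((Finset.range (k + 1)).image t).inf' hT (fun s => (x - s) ^ 2)
      = (t 0 - a) ^ 3 / 3 + (b - t k) ^ 3 / 3
        + ∑ i ∈ Finset.range k, (t (i + 1) - t i) ^ 3 / 12 := by
  set F := fun x : ℝ => ((Finset.range (k + 1)).image t).inf' hT (fun s => (x - s) ^ 2)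
  have hF : ∀ c d, IntervalIntegrable F volume c d := fun c d =>
    (Continuous.finset_inf'_apply hT fun s _ => by fun_prop).intervalIntegrable c d
  have hleft : ∫ x in a..t 0, F x = (t 0 - a) ^ 3 / 3 := by
    rw [intervalIntegral.integral_congr fun x hx =>
      inf'_sq_sub_eq_of_le_first ht hT (uIcc_of_le ha ▸ hx).2, integral_sq_sub]
    ring
  have hright : ∫ x in t k..b, F x = (b - t k) ^ 3 / 3 := by
    rw [intervalIntegral.integral_congr fun x hx =>
      inf'_sq_sub_eq_of_last_le ht hT (uIcc_of_le hb ▸ hx).1, integral_sq_sub]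
    ring
  have hgap : ∀ i ∈ Finset.range k,
      ∫ x in t i..t (i + 1), F x = (t (i + 1) - t i) ^ 3 / 12 := by
    intro i hi
    have hle := ht (Nat.le_succ i)
    rw [intervalIntegral.integral_congr fun x hx =>
      inf'_sq_sub_eq_min ht hT (Finset.mem_range.1 hi) (uIcc_of_le hle ▸ hx)]
    exact integral_min_sq_sub hle
  rw [← intervalIntegral.integral_add_adjacent_intervals (hF a (t k)) (hF _ b),
    ← intervalIntegral.integral_add_adjacent_intervals (hF a (t 0)) (hF _ (t k)),
    ← intervalIntegral.sum_integral_adjacent_intervals fun i _ => hF _ _,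
    hleft, hright, Finset.sum_congr rfl hgap]
  ring

theorem cube_div_sq_le_sum_cube_sub (ht : Monotone t) {m : ℝ} (hkm : (k : ℝ) ≤ m) :
    (t k - t 0) ^ 3 / m ^ 2 ≤ ∑ i ∈ Finset.range k, (t (i + 1) - t i) ^ 3 := by
  rcases Nat.eq_zero_or_pos k with rfl | hk
  · simp
  have hpm := pow_sum_div_card_le_sum_pow (s := Finset.range k) (f := fun i => t (i + 1) - t i)
    (fun i _ => sub_nonneg.2 (ht i.le_succ)) 2
  rw [Finset.sum_range_sub, Finset.card_range] at hpm
  refine le_trans (div_le_div_of_nonneg_left (pow_nonneg (sub_nonneg.2 (ht k.zero_le)) 3)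
    (by positivity) ?_) hpm
  have : (0 : ℝ) < k := by exact_mod_cast hk
  gcongr

end SortedPoints

theorem one_div_twelve_add_le {a b u : ℝ} (ha : 1/2 ≤ a) (hab : a ≤ b) (hb : b ≤ 3/2)
    (hu : u ≤ 1/12) :
    1/12 + u ≤ a ^ 3 / 3 + (2 - b) ^ 3 / 3 + (b - a) ^ 3 * u := by
  -- tangent lines of the cubes at `a = 1/2`, `2 - b = 1/2` and `b - a = 1`
  have hcube_a : 0 ≤ (a - 1/2) ^ 2 * (a + 1) := by positivity
  have hcube_b : 0 ≤ (3/2 - b) ^ 2 * (3 - b) := mul_nonneg (sq_nonneg _) (by linarith)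
  have hcube_s : 0 ≤ (1 - (b - a)) ^ 2 * (b - a + 2) := mul_nonneg (sq_nonneg _) (by linarith)
  have hs : 0 ≤ (1 - (b - a) ^ 3) * (1/12 - u) :=
    mul_nonneg (sub_nonneg.2 (pow_le_one₀ (by linarith) (by linarith))) (by linarith)
  nlinarith

theorem Finset.exists_monotone_eq_image_range {α : Type*} [LinearOrder α] (T : Finset α)
    (hT : T.Nonempty) :
    ∃ k : ℕ, ∃ t : ℕ → α, Monotone t ∧ T.card = k + 1 ∧
      T = (Finset.range (k + 1)).image t := by
  obtain ⟨k, hk⟩ : ∃ k, T.card = k + 1 := ⟨T.card - 1, by have := T.card_pos.2 hT; omega⟩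
  set e := T.orderEmbOfFin hk
  refine ⟨k, fun i => e ⟨min i k, by omega⟩,
    fun i j hij => e.monotone (Fin.mk_le_mk.2 (min_le_min_right k hij)), hk, ?_⟩
  ext x
  simp only [Finset.mem_image, Finset.mem_range]
  constructor
  · intro hx
    obtain ⟨j, rfl⟩ : x ∈ Set.range e := by rwa [Finset.range_orderEmbOfFin]
    exact ⟨j, by omega, congrArg e (Fin.ext (by simp; omega))⟩
  · rintro ⟨i, -, rfl⟩
    exact Finset.orderEmbOfFin_mem ..

theorem Set.exists_finset_eq_image_of_injective {α β : Type*} {f : α → β}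
    (hf : Function.Injective f) {s : Set α} {A : Set β} (hA : A ⊆ f '' s) (hfin : A.Finite) :
    ∃ T : Finset α, ↑T ⊆ s ∧ T.card = A.ncard ∧ A = f '' T := by
  obtain ⟨T₀, hT₀s, rfl⟩ := subset_image_iff.1 hA
  have hT₀ : T₀.Finite := hfin.of_finite_image hf.injOn
  refine ⟨hT₀.toFinset, by simpa using hT₀s, ?_, by simp⟩
  rw [ncard_image_of_injective _ hf, ncard_eq_toFinset_card _ hT₀]

theorem le_cDistortion_of_two_le {n : ℕ} (hn : 2 ≤ n) {β : Set E2} (hβ : β ⊆ S₀)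
    (hfin : β.Finite) (hne : 1 ≤ β.ncard) (hcard : β.ncard ≤ n) :
    25/24 + 1/(24 * ((n : ℝ) - 1) ^ 2) ≤ cDistortion P₀ β := by
  rw [segment_cpt_eq_image 1 (by norm_num)] at hβ
  obtain ⟨T, hTsub, hTcard, rfl⟩ :=
    Set.exists_finset_eq_image_of_injective (cpt_left_injective 1) hβ hfin
  have hT : T.Nonempty := Finset.card_pos.1 (by omega)
  obtain ⟨k, t, ht, hk, rfl⟩ := T.exists_monotone_eq_image_range hT
  have hlo : 1/2 ≤ t 0 := (hTsub (Finset.mem_coe.2 (Finset.mem_image_of_mem t (by simp)))).1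
  have hhi : t k ≤ 3/2 := (hTsub (Finset.mem_coe.2 (Finset.mem_image_of_mem t (by simp)))).2
  have hkn : (k : ℝ) ≤ n - 1 := by
    rw [le_sub_iff_add_le]
    exact_mod_cast (show k + 1 ≤ n by omega)
  have hn1 : (1 : ℝ) ≤ n - 1 := by
    rw [le_sub_iff_add_le]
    exact_mod_cast hn
  set m : ℝ := n - 1
  have hgaps := cube_div_sq_le_sum_cube_sub ht hkn
  have hkey := one_div_twelve_add_le (u := 1/(12 * m ^ 2)) hlo (ht k.zero_le) hhi
    (by gcongr; nlinarith)
  rw [cDistortion_image_cpt _ hT, integral_inf'_sq_sub ht hT (by linarith) (by linarith),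
    sub_zero, ← Finset.sum_div]
  calc 25/24 + 1/(24 * m ^ 2) = 1 + 1/2 * (1/12 + 1/(12 * m ^ 2)) := by
        field_simp
        ring
    _ ≤ 1 + 1/2 * (t 0 ^ 3 / 3 + (2 - t k) ^ 3 / 3 + (t k - t 0) ^ 3 / m ^ 2 / 12) := by
        rw [show (t k - t 0) ^ 3 / m ^ 2 / 12 = (t k - t 0) ^ 3 * (1/(12 * m ^ 2)) by field_simp]
        linarith
    _ ≤ _ := by gcongr

theorem cDistortion_singleton_cpt (a : ℝ) :
    cDistortion P₀ {cpt a 1} = 1 + (a ^ 3 + (2 - a) ^ 3) / 6 := by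
  have h := cDistortion_image_cpt {a} (Finset.singleton_nonempty a)
  simp only [Finset.coe_singleton, image_singleton, Finset.inf'_singleton] at h
  rw [h, integral_sq_sub]
  ring

theorem four_thirds_le_cDistortion {β : Set E2} (hβ : β ⊆ S₀) (hcard : β.ncard = 1) :
    4/3 ≤ cDistortion P₀ β := by
  obtain ⟨p, rfl⟩ := ncard_eq_one.1 hcard
  rw [segment_cpt_eq_image 1 (by norm_num), singleton_subset_iff] at hβ
  obtain ⟨a, -, rfl⟩ := hβ
  rw [cDistortion_singleton_cpt]
  nlinarith [sq_nonneg (a - 1)]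

def evenGrid (n : ℕ) : Finset ℝ :=
  (Finset.range n).image fun i : ℕ => 1/2 + i / ((n : ℝ) - 1)

theorem evenGrid_subset_Icc {n : ℕ} : ↑(evenGrid n) ⊆ Icc (1/2 : ℝ) (3/2) := by
  intro x hx
  simp only [evenGrid, Finset.coe_image, Finset.coe_range, mem_image, mem_Iio] at hx
  obtain ⟨i, hi, rfl⟩ := hx
  have hin : (i : ℝ) ≤ n - 1 := by
    rw [le_sub_iff_add_le]
    exact_mod_cast hi
  have h0 : 0 ≤ (i : ℝ) / (n - 1) := div_nonneg i.cast_nonneg (i.cast_nonneg.trans hin)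
  have h1 : (i : ℝ) / (n - 1) ≤ 1 := div_le_one_of_le₀ hin (i.cast_nonneg.trans hin)
  constructor <;> linarith

theorem cDistortion_evenGrid {n : ℕ} (hn : 2 ≤ n) :
    cDistortion P₀ ((cpt · 1) '' evenGrid n) = 25/24 + 1/(24 * ((n : ℝ) - 1) ^ 2) := by
  obtain ⟨k, rfl⟩ : ∃ k, n = k + 1 := ⟨n - 1, by omega⟩
  have hk : (k : ℝ) ≠ 0 := by norm_cast; omega
  have hcast : ((k + 1 : ℕ) : ℝ) - 1 = k := by push_cast; ring
  have ht : Monotone fun i : ℕ => 1/2 + (i : ℝ) / k := fun i j hij => by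
    dsimp only
    gcongr
  have hT : (evenGrid (k + 1)).Nonempty := by simp [evenGrid]
  rw [cDistortion_image_cpt _ hT]
  simp only [evenGrid, hcast] at hT ⊢
  rw [integral_inf'_sq_sub ht hT (by simp) (by field_simp; norm_num)]
  simp only [Nat.cast_add, Nat.cast_one, Nat.cast_zero, zero_div, add_zero, add_div,
    add_sub_add_left_eq_sub, div_self hk, add_sub_cancel_left, Finset.sum_const,
    Finset.card_range, nsmul_eq_mul]
  field_simp
  ring

theorem IsOptimalNSet.of_forall_le {P : Measure E2} {S : Set E2} {n : ℕ} {α : Set E2}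
    (hαS : α ⊆ S) (hfin : α.Finite) (hne : 1 ≤ α.ncard) (hcard : α.ncard ≤ n)
    (hmin : ∀ β ⊆ S, β.Finite → 1 ≤ β.ncard → β.ncard ≤ n →
      cDistortion P α ≤ cDistortion P β) :
    IsOptimalNSet P S n α := by
  refine ⟨hαS, hfin, hne, hcard,
    Eq.symm (IsLeast.csInf_eq ⟨⟨α, hαS, hfin, hne, hcard, rfl⟩, ?_⟩)⟩
  rintro _ ⟨β, hβS, hβfin, hβne, hβcard, rfl⟩
  exact hmin β hβS hβfin hβne hβcard

theorem isOptimalNSet_one : IsOptimalNSet P₀ S₀ 1 {cpt 1 1} := by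
  refine .of_forall_le ?_ (finite_singleton _) (by simp) (by simp)
    fun β hβ _ hne hcard => ?_
  · rw [segment_cpt_eq_image 1 (by norm_num), singleton_subset_iff]
    exact mem_image_of_mem _ (by norm_num)
  · calc cDistortion P₀ {cpt 1 1} = 4/3 := by rw [cDistortion_singleton_cpt]; norm_num
      _ ≤ _ := four_thirds_le_cDistortion hβ (by omega)

theorem isOptimalNSet_evenGrid {n : ℕ} (hn : 2 ≤ n) :
    IsOptimalNSet P₀ S₀ n ((cpt · 1) '' evenGrid n) := by
  have hcard : ((cpt · 1) '' (evenGrid n : Set ℝ)).ncard = (evenGrid n).card := by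
    rw [ncard_image_of_injective _ (cpt_left_injective 1), ncard_coe_finset]
  refine .of_forall_le ?_ ((evenGrid n).finite_toSet.image _) ?_ ?_
    fun β hβ hfin hne hβcard => ?_
  · rw [segment_cpt_eq_image 1 (by norm_num)]
    exact image_mono evenGrid_subset_Icc
  · rw [hcard, Nat.one_le_iff_ne_zero, Finset.card_ne_zero]
    exact Finset.image_nonempty.2 (Finset.nonempty_range_iff.2 (by omega))
  · exact hcard ▸ Finset.card_image_le.trans (Finset.card_range n).le
  · rw [cDistortion_evenGrid hn]
    exact le_cDistortion_of_two_le hn hβ hfin hne hβcard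

theorem evenGrid_two : evenGrid 2 = {1/2, 3/2} := by
  norm_num [evenGrid, Finset.range_add_one]
  exact Finset.pair_comm _ _

theorem image_Icc_eq_image_evenGrid (n : ℕ) :
    (fun i : ℕ => cpt
        (if i = 1 then 1/2
          else if i = n then 3/2
          else 1/2 + ((i : ℝ) - 1) / ((n : ℝ) - 1)) 1) '' Icc 1 n
      = (cpt · 1) '' evenGrid n := by
  have hval {i : ℕ} (h1 : 1 ≤ i) (hn : i ≤ n) :
      (if i = 1 then 1/2 else if i = n then 3/2 else 1/2 + ((i : ℝ) - 1) / ((n : ℝ) - 1))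
        = 1/2 + ((i - 1 : ℕ) : ℝ) / ((n : ℝ) - 1) := by
    rw [Nat.cast_sub h1, Nat.cast_one]
    split_ifs with hi1 hin
    · simp [hi1]
    · subst hin
      have : (i : ℝ) - 1 ≠ 0 := sub_ne_zero.2 (by exact_mod_cast hi1)
      rw [div_self this]
      norm_num
    · rfl
  ext p
  simp only [evenGrid, Finset.coe_image, Finset.coe_range, ← image_comp, mem_image, mem_Icc,
    mem_Iio, Function.comp_apply]
  constructor
  · rintro ⟨i, ⟨h1, hn⟩, rfl⟩
    exact ⟨i - 1, by omega, by rw [hval h1 hn]⟩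
  · rintro ⟨j, hj, rfl⟩
    exact ⟨j + 1, ⟨by omega, by omega⟩, by rw [hval (by omega) hj, Nat.succ_sub_one]⟩

/-- For the uniform distribution `P` on `{(x,0) : 0 ≤ x ≤ 2}`, with constraint the segment of the
line `y = 1` joining `(1/2, 1)` and `(3/2, 1)`: `{(1,1)}` is an optimal set of one point,
`{(1/2,1), (3/2,1)}` is an optimal set of two points, and for every `n ≥ 3` the set
`{(aᵢ, 1) : 1 ≤ i ≤ n}` with `a₁ = 1/2`, `aᵢ = 1/2 + (i-1)/(n-1)` for `2 ≤ i ≤ n-1` and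
`aₙ = 3/2` is an optimal set of `n` points, with `n`th constrained quantization error
`(25n² - 50n + 26)/(24(n-1)²)`. -/
theorem optimal_sets_uniform_segment_line_y_eq_one_middle :
    IsOptimalNSet (Measure.map (fun x : ℝ => cpt x 0) (uniformIccM 0 2))
      (segment ℝ (cpt (1/2) 1) (cpt (3/2) 1)) 1 {cpt 1 1} ∧
    IsOptimalNSet (Measure.map (fun x : ℝ => cpt x 0) (uniformIccM 0 2))
      (segment ℝ (cpt (1/2) 1) (cpt (3/2) 1)) 2 {cpt (1/2) 1, cpt (3/2) 1} ∧
    ∀ n : ℕ, 3 ≤ n →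
      IsOptimalNSet (Measure.map (fun x : ℝ => cpt x 0) (uniformIccM 0 2))
        (segment ℝ (cpt (1/2) 1) (cpt (3/2) 1)) n
        ((fun i : ℕ => cpt
            (if i = 1 then 1/2
              else if i = n then 3/2
              else 1/2 + ((i : ℝ) - 1) / ((n : ℝ) - 1)) 1) '' Icc 1 n) ∧
      cqError (Measure.map (fun x : ℝ => cpt x 0) (uniformIccM 0 2))
        (segment ℝ (cpt (1/2) 1) (cpt (3/2) 1)) n =
        (25 * (n : ℝ) ^ 2 - 50 * (n : ℝ) + 26) / (24 * ((n : ℝ) - 1) ^ 2) := by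
  refine ⟨isOptimalNSet_one, ?_, fun n hn => ?_⟩
  · simpa [evenGrid_two, image_pair] using isOptimalNSet_evenGrid le_rfl
  · have hopt := isOptimalNSet_evenGrid (n := n) (by omega)
    refine ⟨image_Icc_eq_image_evenGrid n ▸ hopt, ?_⟩
    have hn1 : (n : ℝ) - 1 ≠ 0 := sub_ne_zero.2 (by norm_cast; omega)
    rw [← hopt.2.2.2.2, cDistortion_evenGrid (by omega)]
    field_simp
    ring
end
end

section
/- Let P be the uniform probability measure on the unit circle in ℝ², let a > 0, and let the constraint be the concentric circle L of radius a. Then for every θ ∈ [0,2π], the antipodal pair {(a cos θ, a sin θ), (−a cos θ, −a sin θ)} is an optimal set of two points, and the second constrained quantization error is V_2 = 1 + a² − 4a/π. -/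
/-! Place the two points at angles `φ` and `ψ` and measure the angle `s` of a point of the unit
circle from their bisector `(φ + ψ) / 2`. With `δ = (φ - ψ) / 2`, the squared distance to the
nearer point is `1 + a² - 2a cos δ cos s - 2a |sin δ| |sin s|`. Averaging over the circle kills
`cos s` and replaces `|sin s|` by `2 / π`, so the distortion of any pair is
`1 + a² - (4a / π) |sin δ|` (a single point being the pair with `δ = 0`). It is least exactly when
`|sin δ| = 1`, that is, for antipodal pairs. -/

open MeasureTheory Real Set

noncomputable section

/-- The uniform probability distribution on the unit circle: the pushforward of the uniform
distribution on `[0, 2π]` under `t ↦ (cos t, sin t)`. -/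
def circleUniform : Measure E2 :=
  Measure.map (fun t : ℝ => cpt (Real.cos t) (Real.sin t)) (uniformIccM 0 (2 * π))

theorem ciInf_pair {α β : Type*} [ConditionallyCompleteLinearOrder β] (f : α → β) (p q : α) :
    ⨅ x : ({p, q} : Set α), f x = min (f p) (f q) := by
  rw [iInf, ← Set.image_eq_range, Set.image_pair, csInf_pair]

theorem min_sub_add_eq_sub_abs {β : Type*} [AddCommGroup β] [LinearOrder β]
    [IsOrderedAddMonoid β] (c y : β) : min (c - y) (c + y) = c - |y| := by
  rw [abs_eq_max_neg, ← min_sub_sub_left, sub_neg_eq_add]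

theorem Set.exists_eq_pair_of_ncard_le_two {α : Type*} {s : Set α} (h₁ : 1 ≤ s.ncard)
    (h₂ : s.ncard ≤ 2) : ∃ p q, s = {p, q} := by
  obtain h | h : s.ncard = 1 ∨ s.ncard = 2 := by omega
  · obtain ⟨p, rfl⟩ := Set.ncard_eq_one.mp h
    exact ⟨p, p, (Set.pair_eq_singleton p).symm⟩
  · obtain ⟨p, q, -, rfl⟩ := Set.ncard_eq_two.mp h
    exact ⟨p, q, rfl⟩

theorem Set.one_le_ncard_pair {α : Type*} (p q : α) : 1 ≤ ({p, q} : Set α).ncard :=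
  Set.one_le_ncard_insert p {q}

theorem Set.ncard_pair_le_two {α : Type*} (p q : α) : ({p, q} : Set α).ncard ≤ 2 :=
  (Set.ncard_insert_le p {q}).trans (by rw [Set.ncard_singleton])

theorem Function.Periodic.intervalIntegral_comp_sub {f : ℝ → ℝ} {T : ℝ} (hf : f.Periodic T)
    (m : ℝ) : ∫ t in (0 : ℝ)..T, f (t - m) = ∫ t in (0 : ℝ)..T, f t := by
  rw [intervalIntegral.integral_comp_sub_right, zero_sub, sub_eq_neg_add,
    hf.intervalIntegral_add_eq (-m) 0, zero_add]

theorem integral_abs_sin_zero_two_pi : ∫ t in (0 : ℝ)..2 * π, |Real.sin t| = 4 := by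
  have hper : Function.Periodic (fun t => |Real.sin t|) π := fun t => by
    simp only [Real.sin_add_pi, abs_neg]
  have hdouble := hper.intervalIntegral_add_zsmul_eq 2 0
    (fun _ _ => continuous_sin.abs.intervalIntegrable _ _)
  have half : ∫ t in (0 : ℝ)..π, |Real.sin t| = 2 := by
    rw [intervalIntegral.integral_congr (g := Real.sin), integral_sin, Real.cos_zero,
      Real.cos_pi]
    · norm_num
    · intro t ht
      rw [Set.uIcc_of_le Real.pi_pos.le] at ht
      exact abs_of_nonneg (Real.sin_nonneg_of_mem_Icc ht)
  rw [zero_add, zero_add, two_zsmul, two_zsmul, half] at hdouble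
  rw [two_mul, hdouble]
  norm_num

theorem integral_sub_mul_cos_sub_mul_abs_sin (A B C : ℝ) :
    ∫ s in (0 : ℝ)..2 * π, A - B * Real.cos s - C * |Real.sin s| = 2 * π * A - 4 * C := by
  rw [intervalIntegral.integral_sub, intervalIntegral.integral_sub, intervalIntegral.integral_const,
    intervalIntegral.integral_const_mul, intervalIntegral.integral_const_mul, integral_cos,
    integral_abs_sin_zero_two_pi, Real.sin_two_pi, Real.sin_zero, sub_zero, smul_eq_mul]
  · ring
  all_goals exact Continuous.intervalIntegrable (by fun_prop) _ _

theorem norm_cpt_polar (r θ : ℝ) : ‖cpt (r * Real.cos θ) (r * Real.sin θ)‖ = |r| := by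
  rw [EuclideanSpace.norm_eq]
  simp only [cpt, Real.norm_eq_abs, sq_abs, Fin.sum_univ_two, Matrix.cons_val_zero,
    Matrix.cons_val_one, Matrix.cons_val_fin_one, mul_pow]
  rw [← mul_add, Real.cos_sq_add_sin_sq, mul_one, Real.sqrt_sq_eq_abs]

theorem cpt_polar_mem_sphere {a : ℝ} (ha : 0 ≤ a) (θ : ℝ) :
    cpt (a * Real.cos θ) (a * Real.sin θ) ∈ Metric.sphere (0 : E2) a := by
  rw [mem_sphere_zero_iff_norm, norm_cpt_polar, abs_of_nonneg ha]

theorem cpt_neg_polar (a θ : ℝ) :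
    cpt (-(a * Real.cos θ)) (-(a * Real.sin θ))
      = cpt (a * Real.cos (θ + π)) (a * Real.sin (θ + π)) := by
  rw [Real.cos_add_pi, Real.sin_add_pi, mul_neg, mul_neg]

theorem antipodal_pair_subset_sphere {a : ℝ} (ha : 0 ≤ a) (θ : ℝ) :
    {cpt (a * Real.cos θ) (a * Real.sin θ), cpt (-(a * Real.cos θ)) (-(a * Real.sin θ))}
      ⊆ Metric.sphere (0 : E2) a := by
  rw [Set.pair_subset_iff, cpt_neg_polar]
  exact ⟨cpt_polar_mem_sphere ha _, cpt_polar_mem_sphere ha _⟩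

theorem exists_angle_of_mem_sphere {a : ℝ} {p : E2} (hp : p ∈ Metric.sphere (0 : E2) a) :
    ∃ θ, p = cpt (a * Real.cos θ) (a * Real.sin θ) := by
  set z := Complex.orthonormalBasisOneI.repr.symm p
  have hz : ‖z‖ = a := by
    rw [← mem_sphere_zero_iff_norm.mp hp]
    exact LinearIsometryEquiv.norm_map _ _
  refine ⟨z.arg, ?_⟩
  rw [← hz, Complex.norm_mul_cos_arg, Complex.norm_mul_sin_arg]
  exact (Complex.orthonormalBasisOneI.repr.apply_symm_apply p).symm

theorem dist_cpt_polar_sq (r s t θ : ℝ) :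
    dist (cpt (r * Real.cos t) (r * Real.sin t)) (cpt (s * Real.cos θ) (s * Real.sin θ)) ^ 2
      = r ^ 2 + s ^ 2 - 2 * r * s * Real.cos (t - θ) := by
  rw [EuclideanSpace.dist_eq, Real.sq_sqrt (by positivity)]
  simp only [cpt, Real.dist_eq, sq_abs, Fin.sum_univ_two, Matrix.cons_val_zero,
    Matrix.cons_val_one, Matrix.cons_val_fin_one, Real.cos_sub]
  linear_combination r ^ 2 * Real.sin_sq_add_cos_sq t + s ^ 2 * Real.sin_sq_add_cos_sq θ

theorem min_dist_sq_cpt_polar_pair (a φ ψ t : ℝ) :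
    min (dist (cpt (Real.cos t) (Real.sin t)) (cpt (a * Real.cos φ) (a * Real.sin φ)) ^ 2)
        (dist (cpt (Real.cos t) (Real.sin t)) (cpt (a * Real.cos ψ) (a * Real.sin ψ)) ^ 2)
      = 1 + a ^ 2 - 2 * a * Real.cos ((φ - ψ) / 2) * Real.cos (t - (φ + ψ) / 2)
          - 2 * |a| * |Real.sin ((φ - ψ) / 2)| * |Real.sin (t - (φ + ψ) / 2)| := by
  have hdist (θ : ℝ) :
      dist (cpt (Real.cos t) (Real.sin t)) (cpt (a * Real.cos θ) (a * Real.sin θ)) ^ 2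
        = 1 + a ^ 2 - 2 * a * Real.cos (t - θ) := by
    simpa using dist_cpt_polar_sq 1 a t θ
  set δ := (φ - ψ) / 2
  set s := t - (φ + ψ) / 2
  have hφ : t - φ = s - δ := by ring
  have hψ : t - ψ = s + δ := by ring
  rw [hdist, hdist, hφ, hψ, Real.cos_sub, Real.cos_add]
  calc _ = min (1 + a ^ 2 - 2 * a * Real.cos δ * Real.cos s - 2 * a * Real.sin δ * Real.sin s)
        (1 + a ^ 2 - 2 * a * Real.cos δ * Real.cos s + 2 * a * Real.sin δ * Real.sin s) := by
        congr 1 <;> ring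
    _ = _ := min_sub_add_eq_sub_abs _ _
    _ = _ := by rw [abs_mul, abs_mul, abs_mul, abs_two]

theorem continuous_cpt_cos_sin : Continuous fun t : ℝ => cpt (Real.cos t) (Real.sin t) := by
  refine (PiLp.continuous_toLp 2 _).comp (continuous_pi fun i => ?_)
  fin_cases i
  exacts [continuous_cos, continuous_sin]

theorem integral_circleUniform {f : E2 → ℝ} (hf : AEStronglyMeasurable f circleUniform) :
    ∫ x, f x ∂circleUniform
      = (2 * π)⁻¹ * ∫ t in (0 : ℝ)..2 * π, f (cpt (Real.cos t) (Real.sin t)) := by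
  rw [circleUniform, integral_map continuous_cpt_cos_sin.aemeasurable hf, uniformIccM,
    integral_smul_measure, integral_Icc_eq_integral_Ioc,
    ← intervalIntegral.integral_of_le (by positivity), sub_zero, smul_eq_mul,
    ENNReal.toReal_inv, ENNReal.toReal_ofReal (by positivity)]

theorem cDistortion_circleUniform_pair (a φ ψ : ℝ) :
    cDistortion circleUniform
        {cpt (a * Real.cos φ) (a * Real.sin φ), cpt (a * Real.cos ψ) (a * Real.sin ψ)}
      = 1 + a ^ 2 - 4 * |a| / π * |Real.sin ((φ - ψ) / 2)| := by
  set g : ℝ → ℝ := fun s => 1 + a ^ 2 - 2 * a * Real.cos ((φ - ψ) / 2) * Real.cos s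
    - 2 * |a| * |Real.sin ((φ - ψ) / 2)| * |Real.sin s|
  have hg : g.Periodic (2 * π) := fun s => by
    simp only [g, Real.cos_add_two_pi, Real.sin_add_two_pi]
  set p := cpt (a * Real.cos φ) (a * Real.sin φ)
  set q := cpt (a * Real.cos ψ) (a * Real.sin ψ)
  have hmin (x : E2) :
      ⨅ y : ({p, q} : Set E2), dist x y ^ 2 = min (dist x p ^ 2) (dist x q ^ 2) :=
    ciInf_pair (fun y => dist x y ^ 2) p q
  have hcont : Continuous fun x : E2 => min (dist x p ^ 2) (dist x q ^ 2) := by fun_prop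
  simp only [cDistortion, hmin]
  rw [integral_circleUniform hcont.aestronglyMeasurable]
  simp only [p, q, min_dist_sq_cpt_polar_pair]
  change (2 * π)⁻¹ * ∫ t in (0 : ℝ)..2 * π, g (t - (φ + ψ) / 2) = _
  rw [hg.intervalIntegral_comp_sub, integral_sub_mul_cos_sub_mul_abs_sin]
  field_simp

theorem cDistortion_circleUniform_antipodal (a θ : ℝ) :
    cDistortion circleUniform
        {cpt (a * Real.cos θ) (a * Real.sin θ), cpt (-(a * Real.cos θ)) (-(a * Real.sin θ))}
      = 1 + a ^ 2 - 4 * |a| / π := by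
  rw [cpt_neg_polar, cDistortion_circleUniform_pair, show (θ - (θ + π)) / 2 = -(π / 2) by ring,
    Real.sin_neg, Real.sin_pi_div_two, abs_neg, abs_one, mul_one]

theorem isLeast_cDistortion_circleUniform_sphere_two {a : ℝ} (ha : 0 ≤ a) :
    IsLeast {v : ℝ | ∃ α : Set E2, α ⊆ Metric.sphere (0 : E2) a ∧ α.Finite ∧ 1 ≤ α.ncard ∧
      α.ncard ≤ 2 ∧ v = cDistortion circleUniform α} (1 + a ^ 2 - 4 * a / π) := by
  constructor
  · exact ⟨_, antipodal_pair_subset_sphere ha 0, Set.toFinite _, Set.one_le_ncard_pair _ _,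
      Set.ncard_pair_le_two _ _, by rw [cDistortion_circleUniform_antipodal, abs_of_nonneg ha]⟩
  · rintro _ ⟨α, hα, -, h₁, h₂, rfl⟩
    obtain ⟨p, q, rfl⟩ := Set.exists_eq_pair_of_ncard_le_two h₁ h₂
    rw [Set.pair_subset_iff] at hα
    obtain ⟨φ, rfl⟩ := exists_angle_of_mem_sphere hα.1
    obtain ⟨ψ, rfl⟩ := exists_angle_of_mem_sphere hα.2
    rw [cDistortion_circleUniform_pair, abs_of_nonneg ha]
    exact sub_le_sub_left (mul_le_of_le_one_right (by positivity) (Real.abs_sin_le_one _)) _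

/-- For the uniform distribution on the unit circle with constraint the concentric circle of
radius `a > 0`: for every `θ ∈ [0, 2π]` the antipodal pair
`{(a cos θ, a sin θ), (-a cos θ, -a sin θ)}` is an optimal set of two points, and the second
constrained quantization error is `V₂ = 1 + a² - 4a/π`. -/
theorem circle_constraint_optimal_two_points (a : ℝ) (ha : 0 < a) :
    (∀ θ ∈ Icc (0 : ℝ) (2 * π),
      IsOptimalNSet circleUniform (Metric.sphere (0 : E2) a) 2
        {cpt (a * Real.cos θ) (a * Real.sin θ),
          cpt (-(a * Real.cos θ)) (-(a * Real.sin θ))}) ∧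
    cqError circleUniform (Metric.sphere (0 : E2) a) 2 = 1 + a ^ 2 - 4 * a / π := by
  have hV : cqError circleUniform (Metric.sphere (0 : E2) a) 2 = 1 + a ^ 2 - 4 * a / π :=
    (isLeast_cDistortion_circleUniform_sphere_two ha.le).csInf_eq
  refine ⟨fun θ _ => ⟨antipodal_pair_subset_sphere ha.le θ, Set.toFinite _,
    Set.one_le_ncard_pair _ _, Set.ncard_pair_le_two _ _, ?_⟩, hV⟩
  rw [cDistortion_circleUniform_antipodal, abs_of_pos ha, hV]
end
end

section
/- Let V_n = (25n² − 50n + 26)/(24(n−1)²) for n ≥ 3 (the nth constrained quantization error for the uniform distribution on {(x,0) : 0 ≤ x ≤ 2} with constraint the segment of y = 1 between (1/2,1) and (3/2,1)). Then V_n converges to V_∞ = 25/24 as n → ∞, the constrained quantization dimension lim_{n→∞} 2·log n / (−log(V_n − V_∞)) equals 1, and the 1-dimensional constrained quantization coefficient lim_{n→∞} n²·(V_n − V_∞) equals 1/24. -/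
/-!
The error formula gives exactly `Vₙ - 25/24 = 1/(24(n-1)²)`, so `n²(Vₙ - 25/24) → 1/24`.
Whenever `n^p eₙ` tends to a positive limit, `eₙ → 0` and `-log eₙ = p log n + O(1)`; with
`p = 2` this turns the coefficient into the convergence `Vₙ → 25/24` and the dimension `1`.
-/

open Filter Real Topology

section QuantizationAsymptotics

variable {e : ℕ → ℝ} {p C : ℝ}

theorem tendsto_zero_of_tendsto_rpow_mul (hp : 0 < p)
    (h : Tendsto (fun n : ℕ => (n : ℝ) ^ p * e n) atTop (𝓝 C)) :
    Tendsto e atTop (𝓝 0) := by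
  have hdecay : Tendsto (fun n : ℕ => (n : ℝ) ^ (-p)) atTop (𝓝 0) :=
    (tendsto_rpow_neg_atTop hp).comp tendsto_natCast_atTop_atTop
  refine (zero_mul C ▸ hdecay.mul h).congr' ?_
  filter_upwards [eventually_gt_atTop 0] with n hn
  have hpos : (0 : ℝ) < (n : ℝ) ^ p := rpow_pos_of_pos (Nat.cast_pos.mpr hn) p
  rw [rpow_neg (Nat.cast_nonneg n), ← mul_assoc, inv_mul_cancel₀ hpos.ne', one_mul]

/-- With `p = 2/κ`: a positive finite `κ`-dimensional coefficient forces dimension `κ`. -/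
theorem tendsto_mul_log_div_neg_log_of_tendsto_rpow_mul (hp : 0 < p) (hC : 0 < C)
    (h : Tendsto (fun n : ℕ => (n : ℝ) ^ p * e n) atTop (𝓝 C)) :
    Tendsto (fun n : ℕ => p * log n / (-log (e n))) atTop (𝓝 1) := by
  have hlog : Tendsto (fun n : ℕ => p * log n) atTop atTop :=
    (tendsto_log_atTop.comp tendsto_natCast_atTop_atTop).const_mul_atTop hp
  have hratio : Tendsto (fun n : ℕ => 1 - log ((n : ℝ) ^ p * e n) / (p * log n)) atTop (𝓝 1) := by
    simpa using tendsto_const_nhds.sub (((continuousAt_log hC.ne').tendsto.comp h).div_atTop hlog)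
  refine (inv_one (G := ℝ) ▸ hratio.inv₀ one_ne_zero).congr' ?_
  filter_upwards [eventually_gt_atTop 1, h.eventually (lt_mem_nhds hC)] with n hn hpos
  have hn' : (1 : ℝ) < n := by exact_mod_cast hn
  have hnp : 0 < (n : ℝ) ^ p := rpow_pos_of_pos (by linarith) p
  have hlogn : 0 < p * log n := mul_pos hp (log_pos hn')
  have he : 0 < e n := pos_of_mul_pos_right hpos hnp.le
  have hsplit : 1 - (p * log n + log (e n)) / (p * log n) = -log (e n) / (p * log n) := by
    rw [add_div, div_self hlogn.ne']
    ring
  rw [log_mul hnp.ne' he.ne', log_rpow (by linarith), hsplit, inv_div]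

end QuantizationAsymptotics

theorem constrainedError_sub_limit_eq {x : ℝ} (hx : x ≠ 1) :
    (25 * x ^ 2 - 50 * x + 26) / (24 * (x - 1) ^ 2) - 25 / 24 = 1 / (24 * (x - 1) ^ 2) := by
  have : x - 1 ≠ 0 := sub_ne_zero.mpr hx
  field_simp
  ring

theorem tendsto_sq_mul_constrainedError_sub_limit :
    Tendsto (fun n : ℕ => (n : ℝ) ^ 2 *
      ((25 * (n : ℝ) ^ 2 - 50 * (n : ℝ) + 26) / (24 * ((n : ℝ) - 1) ^ 2) - 25 / 24))
      atTop (𝓝 (1 / 24)) := by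
  have hratio := ((tendsto_natCast_div_add_atTop (-1 : ℝ)).pow 2).div_const 24
  rw [one_pow] at hratio
  refine hratio.congr' ?_
  filter_upwards [eventually_gt_atTop 1] with n hn
  have hn' : (n : ℝ) - 1 ≠ 0 := sub_ne_zero.mpr (by exact_mod_cast hn.ne')
  rw [constrainedError_sub_limit_eq (by exact_mod_cast hn.ne'), ← sub_eq_add_neg]
  field_simp

/-- For `Vₙ = (25n² - 50n + 26)/(24(n-1)²)` (the `n`th constrained quantization error for the
uniform distribution on `{(x,0) : 0 ≤ x ≤ 2}` with constraint the segment of `y = 1` between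
`(1/2, 1)` and `(3/2, 1)`): `Vₙ → V_∞ = 25/24`, the constrained quantization dimension
`lim 2 log n / (-log(Vₙ - V_∞))` equals `1`, and the `1`-dimensional constrained quantization
coefficient `lim n² (Vₙ - V_∞)` equals `1/24`. -/
theorem constrained_dimension_coefficient_segment_middle :
    ∀ V : ℕ → ℝ,
      (V = fun n : ℕ => (25 * (n : ℝ) ^ 2 - 50 * (n : ℝ) + 26) / (24 * ((n : ℝ) - 1) ^ 2)) →
      Tendsto V atTop (nhds (25 / 24)) ∧
      Tendsto (fun n : ℕ => 2 * Real.log n / (-Real.log (V n - 25 / 24)))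
        atTop (nhds 1) ∧
      Tendsto (fun n : ℕ => (n : ℝ) ^ 2 * (V n - 25 / 24)) atTop (nhds (1 / 24)) := by
  intro V hV
  have hcoef : Tendsto (fun n : ℕ => (n : ℝ) ^ 2 * (V n - 25 / 24)) atTop (𝓝 (1 / 24)) :=
    hV ▸ tendsto_sq_mul_constrainedError_sub_limit
  have hcoef' : Tendsto (fun n : ℕ => (n : ℝ) ^ (2 : ℝ) * (V n - 25 / 24)) atTop (𝓝 (1 / 24)) := by
    simpa only [rpow_two] using hcoef
  refine ⟨?_, tendsto_mul_log_div_neg_log_of_tendsto_rpow_mul two_pos (by norm_num) hcoef', hcoef⟩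
  simpa only [sub_add_cancel, zero_add] using
    (tendsto_zero_of_tendsto_rpow_mul two_pos hcoef').add_const (25 / 24 : ℝ)
end

section
/- Let a > 0 and let V_n = a² + 1 − (2an/π)·sin(π/n) for n ≥ 3 (the nth constrained quantization error for the uniform distribution on the unit circle with constraint the concentric circle of radius a). Then V_n converges to V_∞ = (a − 1)² as n → ∞, the constrained quantization dimension lim_{n→∞} 2·log n / (−log(V_n − V_∞)) equals 1, and the 1-dimensional constrained quantization coefficient lim_{n→∞} n²·(V_n − V_∞) equals π²a/3. -/
open Filter Real Topology

/-! With `x = π / n` one has `n² (Vₙ - (a - 1)²) = 2 a π² (x - sin x) / x³`, and the Taylor bound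
`|sin x - (x - x³/6)| ≤ |x|⁵ / 100` gives `(x - sin x) / x³ → 1/6`, hence the coefficient `π² a / 3`.
Once `n² eₙ` has a positive limit, `eₙ → 0` and `-log eₙ = 2 log n - log (n² eₙ) = 2 log n + O(1)`,
so the dimension is `1`. -/

theorem tendsto_sub_sin_div_pow_three :
    Tendsto (fun x : ℝ => (x - sin x) / x ^ 3) (𝓝[≠] 0) (𝓝 (1 / 6)) := by
  have hbound : Tendsto (fun x : ℝ => x ^ 2 / 100) (𝓝[≠] 0) (𝓝 0) := by
    have : Continuous fun x : ℝ => x ^ 2 / 100 := by fun_prop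
    simpa using this.tendsto 0 |>.mono_left nhdsWithin_le_nhds
  rw [tendsto_iff_norm_sub_tendsto_zero]
  refine squeeze_zero_norm' ?_ hbound
  have hsmall : ∀ᶠ x : ℝ in 𝓝[≠] 0, |x| ≤ 1 :=
    nhdsWithin_le_nhds <| (continuous_abs.tendsto 0).eventually (eventually_le_nhds (by simp))
  filter_upwards [hsmall, self_mem_nhdsWithin] with x hx hx0
  have hx0 : x ≠ 0 := hx0
  have hpos : 0 < |x| ^ 3 := by positivity
  have hrem : (x - sin x) / x ^ 3 - 1 / 6 = -(sin x - (x - x ^ 3 / 6)) / x ^ 3 := by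
    field_simp; ring
  rw [norm_norm, Real.norm_eq_abs, hrem, abs_div, abs_neg, abs_pow, div_le_iff₀ hpos]
  calc |sin x - (x - x ^ 3 / 6)| ≤ |x| ^ 5 / 100 := sin_bound hx
    _ = x ^ 2 / 100 * |x| ^ 3 := by rw [← sq_abs x]; ring

theorem tendsto_sq_mul_one_sub_mul_sin_div {c : ℝ} (hc : c ≠ 0) :
    Tendsto (fun n : ℕ => (n : ℝ) ^ 2 * (1 - n / c * sin (c / n))) atTop (𝓝 (c ^ 2 / 6)) := by
  have hx : Tendsto (fun n : ℕ => c / (n : ℝ)) atTop (𝓝[≠] 0) := by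
    refine tendsto_nhdsWithin_of_tendsto_nhds_of_eventually_within _
      (tendsto_const_div_atTop_nhds_zero_nat c) ?_
    filter_upwards [eventually_ge_atTop 1] with n hn
    exact div_ne_zero hc (by positivity)
  have := (tendsto_sub_sin_div_pow_three.comp hx).const_mul (c ^ 2)
  rw [mul_one_div] at this
  refine this.congr' ?_
  filter_upwards [eventually_ge_atTop 1] with n hn
  have hn : (n : ℝ) ≠ 0 := by positivity
  simp only [Function.comp]
  field_simp

theorem tendsto_zero_of_tendsto_pow_mul {e : ℕ → ℝ} {k : ℕ} (hk : k ≠ 0) {L : ℝ}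
    (h : Tendsto (fun n : ℕ => (n : ℝ) ^ k * e n) atTop (𝓝 L)) :
    Tendsto e atTop (𝓝 0) := by
  have hinv : Tendsto (fun n : ℕ => ((n : ℝ) ^ k)⁻¹) atTop (𝓝 0) :=
    (tendsto_pow_atTop hk |>.comp tendsto_natCast_atTop_atTop).inv_tendsto_atTop
  have := h.mul hinv
  rw [mul_zero] at this
  refine this.congr' ?_
  filter_upwards [eventually_ge_atTop 1] with n hn
  have hn : (n : ℝ) ^ k ≠ 0 := by positivity
  field_simp

theorem tendsto_log_div_neg_log_of_tendsto_pow_mul {e : ℕ → ℝ} {k : ℕ} (hk : k ≠ 0) {L : ℝ}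
    (hL : 0 < L) (h : Tendsto (fun n : ℕ => (n : ℝ) ^ k * e n) atTop (𝓝 L)) :
    Tendsto (fun n : ℕ => k * log n / -log (e n)) atTop (𝓝 1) := by
  have hklog : Tendsto (fun n : ℕ => k * log n) atTop atTop :=
    (tendsto_log_atTop.comp tendsto_natCast_atTop_atTop).const_mul_atTop (by positivity)
  have hratio : Tendsto (fun n : ℕ => log ((n : ℝ) ^ k * e n) * (k * log n)⁻¹) atTop (𝓝 0) := by
    simpa using (h.log hL.ne').mul hklog.inv_tendsto_atTop
  have hmain := ((tendsto_const_nhds (x := (1 : ℝ))).sub hratio).inv₀ (by norm_num)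
  rw [sub_zero, inv_one] at hmain
  refine hmain.congr' ?_
  filter_upwards [h.eventually (eventually_gt_nhds hL), hklog.eventually_gt_atTop 0,
    eventually_ge_atTop 1] with n hpos hklog_pos hn
  have hn : (0 : ℝ) < (n : ℝ) ^ k := by positivity
  have he : 0 < e n := pos_of_mul_pos_right hpos hn.le
  have hlog : log n ≠ 0 := right_ne_zero_of_mul hklog_pos.ne'
  rw [log_mul hn.ne' he.ne', log_pow, show 1 - (k * log n + log (e n)) * (k * log n)⁻¹ =
    -log (e n) / (k * log n) by field_simp; ring, inv_div]

/-- For `a > 0` and `Vₙ = a² + 1 - (2an/π) sin(π/n)` (the `n`th constrained quantization error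
for the uniform distribution on the unit circle with constraint the concentric circle of radius
`a`): `Vₙ → V_∞ = (a-1)²`, the constrained quantization dimension
`lim 2 log n / (-log(Vₙ - V_∞))` equals `1`, and the `1`-dimensional constrained quantization
coefficient `lim n² (Vₙ - V_∞)` equals `π² a / 3`. -/
theorem constrained_dimension_coefficient_circle (a : ℝ) (ha : 0 < a) :
    ∀ V : ℕ → ℝ,
      (V = fun n : ℕ => a ^ 2 + 1 - (2 * a * (n : ℝ) / π) * Real.sin (π / (n : ℝ))) →
      Tendsto V atTop (nhds ((a - 1) ^ 2)) ∧
      Tendsto (fun n : ℕ => 2 * Real.log n / (-Real.log (V n - (a - 1) ^ 2)))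
        atTop (nhds 1) ∧
      Tendsto (fun n : ℕ => (n : ℝ) ^ 2 * (V n - (a - 1) ^ 2)) atTop
        (nhds (π ^ 2 * a / 3)) := by
  rintro V rfl
  have hcoef : Tendsto (fun n : ℕ => (n : ℝ) ^ 2 * (a ^ 2 + 1 - 2 * a * n / π * sin (π / n)
      - (a - 1) ^ 2)) atTop (𝓝 (π ^ 2 * a / 3)) := by
    convert (tendsto_sq_mul_one_sub_mul_sin_div pi_ne_zero).const_mul (2 * a) using 2 <;> ring
  refine ⟨?_, ?_, hcoef⟩
  · have := (tendsto_zero_of_tendsto_pow_mul two_ne_zero hcoef).const_add ((a - 1) ^ 2)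
    rw [add_zero] at this
    exact this.congr fun n => by ring
  · simpa using tendsto_log_div_neg_log_of_tendsto_pow_mul two_ne_zero (by positivity) hcoef
end

section
/- Let V_n = 7(5788(n−1)n + 3015)/(10125(1−2n)²) for n ≥ 8 (the nth constrained quantization error for the uniform distribution on {(x,0) : 0 ≤ x ≤ 2} with constraint the segment of y = 1 between (0,1) and (28/15,1)). Then V_n converges to V_∞ = 10129/10125 as n → ∞, the constrained quantization dimension lim_{n→∞} 2·log n / (−log(V_n − V_∞)) equals 1, and the 1-dimensional constrained quantization coefficient lim_{n→∞} n²·(V_n − V_∞) equals 2744/10125. -/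
open Filter Real Topology

/-!
The excess error is exactly `Vₙ - V_∞ = 10976 / (10125 (2n - 1)²)`, so `n² (Vₙ - V_∞) → 10976/40500
= 2744/10125`. Conversely, whenever `n^(2/κ) Dₙ → c > 0` we have `Dₙ → 0` and
`-log Dₙ = (2/κ) log n - log c + o(1)`, so `2 log n / (-log Dₙ) → κ`.
-/

theorem tendsto_of_tendsto_rpow_mul_sub {κ c L : ℝ} (hκ : 0 < κ) {V : ℕ → ℝ}
    (h : Tendsto (fun n : ℕ => (n : ℝ) ^ (2 / κ) * (V n - L)) atTop (𝓝 c)) :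
    Tendsto V atTop (𝓝 L) := by
  have hdecay : Tendsto (fun n : ℕ => (n : ℝ) ^ (-(2 / κ))) atTop (𝓝 0) :=
    (tendsto_rpow_neg_atTop (by positivity)).comp tendsto_natCast_atTop_atTop
  have hsub : Tendsto (fun n : ℕ => V n - L) atTop (𝓝 0) := by
    refine (zero_mul c ▸ hdecay.mul h).congr' ?_
    filter_upwards [eventually_ne_atTop 0] with n hn
    rw [← mul_assoc, ← rpow_add (by positivity), neg_add_cancel, rpow_zero, one_mul]
  simpa using hsub.add_const L

theorem tendsto_two_mul_log_div_neg_log_of_tendsto_rpow_mul {κ c : ℝ} (hκ : 0 < κ) (hc : 0 < c)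
    {D : ℕ → ℝ} (h : Tendsto (fun n : ℕ => (n : ℝ) ^ (2 / κ) * D n) atTop (𝓝 c)) :
    Tendsto (fun n : ℕ => 2 * log n / -log (D n)) atTop (𝓝 κ) := by
  have hlog : Tendsto (fun n : ℕ => log ((n : ℝ) ^ (2 / κ) * D n)) atTop (𝓝 (log c)) :=
    (continuousAt_log hc.ne').tendsto.comp h
  have hlogn : Tendsto (fun n : ℕ => 2 * log n) atTop atTop :=
    (tendsto_log_atTop.comp tendsto_natCast_atTop_atTop).const_mul_atTop two_pos
  have hratio : Tendsto (fun n : ℕ => κ⁻¹ - log ((n : ℝ) ^ (2 / κ) * D n) / (2 * log n))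
      atTop (𝓝 κ⁻¹) := by
    simpa using tendsto_const_nhds.sub (hlog.div_atTop hlogn)
  refine (inv_inv κ ▸ hratio.inv₀ (inv_ne_zero hκ.ne')).congr' ?_
  filter_upwards [h.eventually (eventually_gt_nhds hc), eventually_gt_atTop 1] with n hpos hn
  have hD : 0 < D n := pos_of_mul_pos_right hpos (by positivity)
  have hlogpos : 0 < log n := log_pos (by exact_mod_cast hn)
  have hsplit : κ⁻¹ - (2 / κ * log n + log (D n)) / (2 * log n) = -log (D n) / (2 * log n) := by
    field_simp
    ring
  rw [log_mul (by positivity) hD.ne', log_rpow (by positivity), hsplit, inv_div]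

theorem two_mul_natCast_sub_one_ne_zero (n : ℕ) : (2 * (n : ℝ) - 1) ≠ 0 := by
  rcases Nat.eq_zero_or_pos n with rfl | hn
  · norm_num
  · have : (1 : ℝ) ≤ n := by exact_mod_cast hn
    linarith

theorem tendsto_natCast_div_two_mul_sub_one :
    Tendsto (fun n : ℕ => (n : ℝ) / (2 * n - 1)) atTop (𝓝 (1 / 2)) := by
  have h := (tendsto_natCast_div_add_atTop (-(1 / 2) : ℝ)).const_mul (1 / 2)
  rw [mul_one] at h
  refine h.congr fun n => ?_
  rw [show (2 * (n : ℝ) - 1) = (n + -(1 / 2)) * 2 by ring, ← div_div]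
  ring

theorem segmentOffset_error_sub (n : ℕ) :
    7 * (5788 * ((n : ℝ) - 1) * n + 3015) / (10125 * (1 - 2 * (n : ℝ)) ^ 2) - 10129 / 10125
      = 10976 / (10125 * (2 * n - 1) ^ 2) := by
  have h : 10125 * (2 * (n : ℝ) - 1) ^ 2 ≠ 0 := by
    have := two_mul_natCast_sub_one_ne_zero n
    positivity
  rw [show (1 - 2 * (n : ℝ)) ^ 2 = (2 * n - 1) ^ 2 by ring, div_sub_div _ _ h (by norm_num),
    div_eq_div_iff (mul_ne_zero h (by norm_num)) h]
  ring

/-- For `Vₙ = 7(5788(n-1)n + 3015)/(10125(1-2n)²)` (the `n`th constrained quantization error for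
the uniform distribution on `{(x,0) : 0 ≤ x ≤ 2}` with constraint the segment of `y = 1` between
`(0,1)` and `(28/15, 1)`): `Vₙ → V_∞ = 10129/10125`, the constrained quantization dimension
`lim 2 log n / (-log(Vₙ - V_∞))` equals `1`, and the `1`-dimensional constrained quantization
coefficient `lim n² (Vₙ - V_∞)` equals `2744/10125`. -/
theorem constrained_dimension_coefficient_segment_offset :
    ∀ V : ℕ → ℝ,
      (V = fun n : ℕ => 7 * (5788 * ((n : ℝ) - 1) * (n : ℝ) + 3015) /
        (10125 * (1 - 2 * (n : ℝ)) ^ 2)) →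
      Tendsto V atTop (nhds (10129 / 10125)) ∧
      Tendsto (fun n : ℕ => 2 * Real.log n / (-Real.log (V n - 10129 / 10125)))
        atTop (nhds 1) ∧
      Tendsto (fun n : ℕ => (n : ℝ) ^ 2 * (V n - 10129 / 10125)) atTop
        (nhds (2744 / 10125)) := by
  intro V hV
  have hcoeff : Tendsto (fun n : ℕ => (n : ℝ) ^ 2 * (V n - 10129 / 10125)) atTop
      (𝓝 (2744 / 10125)) := by
    simp only [hV, segmentOffset_error_sub]
    convert (tendsto_natCast_div_two_mul_sub_one.pow 2).const_mul (10976 / 10125 : ℝ) using 2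
    · rw [div_pow, div_mul_div_comm, mul_div_assoc', mul_comm]
    · norm_num
  have hcoeff₁ : Tendsto (fun n : ℕ => (n : ℝ) ^ ((2 : ℝ) / 1) * (V n - 10129 / 10125)) atTop
      (𝓝 (2744 / 10125)) := by
    simpa only [div_one, rpow_two] using hcoeff
  exact ⟨tendsto_of_tendsto_rpow_mul_sub one_pos hcoeff₁,
    tendsto_two_mul_log_div_neg_log_of_tendsto_rpow_mul one_pos (by norm_num) hcoeff₁, hcoeff⟩
end
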